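/- Let T be a rooted 4-spider and p a prize assignment such that for some i < j in {1,…,n−k}, p(uᵢ) ≤ p(uⱼ) and p(u_{i+k}) ≥ p(u_{j+k}). If p' is obtained from p by swapping the prizes of the leaves u_{i+k} and u_{j+k}, then for every integer budget m, maxp(m,𝟙,p) ≤ maxp(m,𝟙,p'). -/

import Mathlib

open Classical in
/-- `maxp n par c p B`: the maximum total prize of a system attack (a rooted
subtree, encoded as a parent-closed set `A` of non-root vertices of the rooted
tree on `Fin (n+1)` with root `0` and parent function `par`; the edge with head
`v` has cost `c v` and the vertex `v` has prize `p v`) whose total edge-cost is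
at most the budget `B`. -/
noncomputable def maxp (n : ℕ) (par : Fin (n+1) → Fin (n+1))
    (c p : Fin (n+1) → ℚ) (B : ℚ) : ℚ :=
  ((((Finset.univ.filter (fun v : Fin (n+1) => v ≠ 0)).powerset).filter
      (fun A => (∀ v ∈ A, par v = 0 ∨ par v ∈ A) ∧ ∑ v ∈ A, c v ≤ B)).image
    (fun A => ∑ v ∈ A, p v)).max.unbotD 0

/-- The multiset of values of `f` over the non-root vertices. -/
def valsNR (n : ℕ) (f : Fin (n+1) → ℚ) : Multiset ℚ :=
  (Finset.univ.filter (fun v : Fin (n+1) => v ≠ 0)).val.map f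

/-- Parent function of the rooted 4-spider: the root `0` has children
`u₁, …, uₖ`, and `u_{k+i}` is the unique child of `uᵢ` for `i ∈ {1,…,n-k}`. -/
def spiderPar (n k : ℕ) : Fin (n+1) → Fin (n+1) :=
  fun v => if h : v.val ≤ k then 0 else ⟨v.val - k, by have := v.isLt; omega⟩

/-!
Exchange argument, with `a = u_{i+k}`, `b = u_{j+k}` and their parents `ua = uᵢ`, `ub = uⱼ`.
Every attack `A` is matched by an attack `A'` of the same size whose prize under `p ∘ swap a b`
is at least the prize of `A` under `p`. If `A` contains `b`, or neither leaf, take `A' = A`. If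
`A` contains `a` but not `b`, move the leaf `a` to `b` when `ub ∈ A`; otherwise replace the
whole leg `{ua, a}` by `{ub, b}`, which gains `p ub - p ua ≥ 0`.
-/

open Finset

section Sums

variable {α M : Type*} [DecidableEq α] [AddCommGroup M] {A : Finset α} {a b : α}

lemma Finset.sum_insert_erase (f : α → M) (ha : a ∈ A) (hb : b ∉ A) :
    ∑ v ∈ insert b (A.erase a), f v = ∑ v ∈ A, f v - f a + f b := by
  rw [sum_insert (fun h => hb (mem_of_mem_erase h)), ← add_sum_erase A f ha]
  abel

lemma Finset.sum_comp_swap_of_mem_of_notMem (f : α → M) (ha : a ∈ A) (hb : b ∉ A) :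
    ∑ v ∈ A, f (Equiv.swap a b v) = ∑ v ∈ A, f v - f a + f b := by
  have hfix : ∑ v ∈ A.erase a, f (Equiv.swap a b v) = ∑ v ∈ A.erase a, f v :=
    sum_congr rfl fun v hv => by
      rw [Equiv.swap_apply_of_ne_of_ne (ne_of_mem_erase hv)
        (by rintro rfl; exact hb (mem_of_mem_erase hv))]
  rw [← add_sum_erase A _ ha, ← add_sum_erase A f ha, hfix, Equiv.swap_apply_left]
  abel

lemma Finset.sum_comp_swap_of_mem_iff (f : α → M) (h : a ∈ A ↔ b ∈ A) :
    ∑ v ∈ A, f (Equiv.swap a b v) = ∑ v ∈ A, f v := by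
  refine sum_equiv (Equiv.swap a b) (fun v => ?_) (fun _ _ => rfl)
  rcases eq_or_ne v a with rfl | hva
  · simpa using h
  rcases eq_or_ne v b with rfl | hvb
  · simpa using h.symm
  rw [Equiv.swap_apply_of_ne_of_ne hva hvb]

end Sums

lemma Finset.unbotD_max_image_le {α β : Type*} [LinearOrder β] {S : Finset α} {f g : α → β}
    (d : β) (h : ∀ x ∈ S, ∃ y ∈ S, f x ≤ g y) :
    (S.image f).max.unbotD d ≤ (S.image g).max.unbotD d := by
  rcases S.eq_empty_or_nonempty with rfl | hS
  · simp
  rw [← coe_max' (hS.image f), ← coe_max' (hS.image g), WithBot.unbotD_coe, WithBot.unbotD_coe]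
  refine max'_le _ _ _ fun _ hfx => ?_
  obtain ⟨x, hx, rfl⟩ := mem_image.mp hfx
  obtain ⟨y, hy, hxy⟩ := h x hx
  exact hxy.trans (le_max' _ _ (mem_image_of_mem g hy))

section Attacks

variable {n : ℕ} {par : Fin (n+1) → Fin (n+1)} {c : Fin (n+1) → ℚ} {B : ℚ}

open Classical in
noncomputable def attacks (n : ℕ) (par : Fin (n+1) → Fin (n+1)) (c : Fin (n+1) → ℚ) (B : ℚ) :
    Finset (Finset (Fin (n+1))) :=
  ((univ.filter (fun v : Fin (n+1) => v ≠ 0)).powerset).filter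
    (fun A => (∀ v ∈ A, par v = 0 ∨ par v ∈ A) ∧ ∑ v ∈ A, c v ≤ B)

lemma mem_attacks {A : Finset (Fin (n+1))} :
    A ∈ attacks n par c B ↔
      (∀ v ∈ A, v ≠ 0) ∧ (∀ v ∈ A, par v = 0 ∨ par v ∈ A) ∧ ∑ v ∈ A, c v ≤ B := by
  simp [attacks, subset_iff]

lemma maxp_le_maxp_of_forall_exists {p q : Fin (n+1) → ℚ}
    (h : ∀ A ∈ attacks n par c B, ∃ A' ∈ attacks n par c B, ∑ v ∈ A, p v ≤ ∑ v ∈ A', q v) :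
    maxp n par c p B ≤ maxp n par c q B :=
  unbotD_max_image_le 0 h

lemma insert_erase_mem_attacks {A : Finset (Fin (n+1))} {a b : Fin (n+1)}
    (hA : A ∈ attacks n par c B) (ha : a ∈ A) (hleaf : ∀ v ∈ A, par v ≠ a) (hb : b ∉ A)
    (hb0 : b ≠ 0) (hpb : par b = 0 ∨ par b ∈ A.erase a) (hc : c b ≤ c a) :
    insert b (A.erase a) ∈ attacks n par c B := by
  obtain ⟨hA0, hclosed, hcost⟩ := mem_attacks.mp hA
  refine mem_attacks.mpr ⟨?_, ?_, ?_⟩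
  · simp only [mem_insert]
    rintro v (rfl | hv)
    exacts [hb0, hA0 v (mem_of_mem_erase hv)]
  · intro v hv
    rcases mem_insert.mp hv with rfl | hv
    · exact hpb.imp_right mem_insert_of_mem
    · have hvA := mem_of_mem_erase hv
      exact (hclosed v hvA).imp_right fun h =>
        mem_insert_of_mem (mem_erase.mpr ⟨hleaf v hvA, h⟩)
  · rw [sum_insert_erase c ha hb]
    linarith

structure ExchangeableLegs (par : Fin (n+1) → Fin (n+1)) (a b ua ub : Fin (n+1)) : Prop where
  b_ne_zero : b ≠ 0
  ua_ne_zero : ua ≠ 0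
  ub_ne_zero : ub ≠ 0
  par_a : par a = ua
  par_b : par b = ub
  par_ub : par ub = 0
  par_ne_a : ∀ v, par v ≠ a
  eq_a_of_par_eq_ua : ∀ v, par v = ua → v = a

lemma ExchangeableLegs.exists_attack_of_mem_of_notMem {a b ua ub : Fin (n+1)}
    (hL : ExchangeableLegs par a b ua ub) {p : Fin (n+1) → ℚ} (hpu : p ua ≤ p ub)
    {A : Finset (Fin (n+1))} (hA : A ∈ attacks n par (fun _ => 1) B) (ha : a ∈ A) (hb : b ∉ A) :
    ∃ A' ∈ attacks n par (fun _ => 1) B, ∑ v ∈ A, p v ≤ ∑ v ∈ A', p (Equiv.swap a b v) := by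
  have hsum := sum_comp_swap_of_mem_of_notMem p ha hb
  have haua : a ≠ ua := fun h => hL.par_ne_a a (h ▸ hL.par_a)
  have haub : a ≠ ub := fun h => hL.ua_ne_zero (hL.par_a ▸ h ▸ hL.par_ub)
  have hbub : b ≠ ub := by rintro rfl; exact hL.ub_ne_zero (hL.par_b ▸ hL.par_ub)
  have hua : ua ∈ A := by
    have h := (mem_attacks.mp hA).2.1 a ha
    rw [hL.par_a] at h
    exact h.resolve_left hL.ua_ne_zero
  have hleaf_a : ∀ v ∈ A, par v ≠ a := fun v _ => hL.par_ne_a v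
  by_cases hub : ub ∈ A
  · refine ⟨insert b (A.erase a), insert_erase_mem_attacks hA ha hleaf_a hb hL.b_ne_zero
      (.inr (hL.par_b ▸ mem_erase.mpr ⟨haub.symm, hub⟩)) le_rfl, ?_⟩
    rw [sum_insert_erase _ ha hb, hsum, Equiv.swap_apply_left, Equiv.swap_apply_right]
    linarith
  -- Two leaf moves: first `a` to `ub`, then `ua` (now a leaf) to `b`.
  set A₁ := insert ub (A.erase a)
  have hA₁ : A₁ ∈ attacks n par (fun _ => 1) B :=
    insert_erase_mem_attacks hA ha hleaf_a hub hL.ub_ne_zero (.inl hL.par_ub) le_rfl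
  have hua₁ : ua ∈ A₁ := mem_insert_of_mem (mem_erase.mpr ⟨haua.symm, hua⟩)
  have hb₁ : b ∉ A₁ := by simp [A₁, hbub, hb]
  have hleaf_ua : ∀ v ∈ A₁, par v ≠ ua := by
    intro v hv hvua
    rcases mem_insert.mp hv with rfl | hv
    · exact hL.ua_ne_zero (hvua ▸ hL.par_ub)
    · exact ne_of_mem_erase hv (hL.eq_a_of_par_eq_ua v hvua)
  refine ⟨insert b (A₁.erase ua), insert_erase_mem_attacks hA₁ hua₁ hleaf_ua hb₁ hL.b_ne_zero
      (.inr (hL.par_b ▸ mem_erase.mpr ⟨fun h => hub (h ▸ hua), mem_insert_self _ _⟩)) le_rfl, ?_⟩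
  rw [sum_insert_erase _ hua₁ hb₁, sum_insert_erase _ ha hub, hsum, Equiv.swap_apply_left,
    Equiv.swap_apply_right, Equiv.swap_apply_of_ne_of_ne haub.symm hbub.symm,
    Equiv.swap_apply_of_ne_of_ne haua.symm (ne_of_mem_of_not_mem hua hb)]
  linarith

lemma ExchangeableLegs.maxp_le_maxp_comp_swap {a b ua ub : Fin (n+1)}
    (hL : ExchangeableLegs par a b ua ub) {p : Fin (n+1) → ℚ} (hpu : p ua ≤ p ub)
    (hpl : p b ≤ p a) :
    maxp n par (fun _ => 1) p B ≤ maxp n par (fun _ => 1) (p ∘ Equiv.swap a b) B := by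
  refine maxp_le_maxp_of_forall_exists fun A hA => ?_
  by_cases hiff : a ∈ A ↔ b ∈ A
  · exact ⟨A, hA, (sum_comp_swap_of_mem_iff p hiff).ge⟩
  by_cases ha : a ∈ A
  · exact hL.exists_attack_of_mem_of_notMem hpu hA ha fun hb => hiff (iff_of_true ha hb)
  · have hb : b ∈ A := by_contra fun hb => hiff (iff_of_false ha hb)
    refine ⟨A, hA, ?_⟩
    simp only [Function.comp_apply]
    rw [Equiv.swap_comm, sum_comp_swap_of_mem_of_notMem p hb ha]
    linarith

end Attacks

lemma spiderPar_val (n k : ℕ) (v : Fin (n+1)) : (spiderPar n k v : ℕ) = v - k := by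
  unfold spiderPar
  split_ifs <;> simp; omega

lemma exchangeableLegs_spiderPar {n k i j : ℕ} (hnk : n ≤ 2 * k) (hi1 : 1 ≤ i) (hij : i < j)
    (hj : j ≤ n - k) :
    ExchangeableLegs (spiderPar n k) ⟨i + k, by omega⟩ ⟨j + k, by omega⟩ ⟨i, by omega⟩
      ⟨j, by omega⟩ := by
  refine ⟨?_, ?_, ?_, ?_, ?_, ?_, fun v => ?_, fun v => ?_⟩ <;>
    simp only [ne_eq, Fin.ext_iff, spiderPar_val, Fin.val_zero] <;> omega

/-- On a rooted 4-spider, if `i < j` in `{1,…,n-k}` with `p uᵢ ≤ p uⱼ` and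
`p u_{i+k} ≥ p u_{j+k}`, then swapping the prizes of the leaves `u_{i+k}` and
`u_{j+k}` never decreases the attacker's maximum prize. -/
theorem stmt16 (n k : ℕ) (hnk : n ≤ 2 * k)
    (p : Fin (n+1) → ℚ)
    (i j : ℕ) (hi1 : 1 ≤ i) (hij : i < j) (hjnk : j + k ≤ n)
    (hpij : p ⟨i, by omega⟩ ≤ p ⟨j, by omega⟩)
    (hleaf : p ⟨j + k, by omega⟩ ≤ p ⟨i + k, by omega⟩)
    (m : ℕ) :
    maxp n (spiderPar n k) (fun _ => 1) p m ≤
      maxp n (spiderPar n k) (fun _ => 1)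
        (p ∘ Equiv.swap ⟨i + k, by omega⟩ ⟨j + k, by omega⟩) m := by
  exact (exchangeableLegs_spiderPar hnk hi1 hij (by omega)).maxp_le_maxp_comp_swap hpij hleaf
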